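/- arXiv:2209.12079 — 2 statements merged into one kernel-verified Lean document; each statement's English description precedes it below -/
import Mathlib

section
/- Let $P_n \subset [0,1]^d$ be a set of $n$ distinct points of the form $G_n(f) = \{(j/q, f(j/q)) : j \in \mathbb{Z}^{d-1} \cap [0,q)^{d-1}\}$ with $n = q^{d-1}$, for some function $f : [0,1]^{d-1} \to [0,1]$. Then for every $s$ with $0 \le s < d-1$ there exists a constant $C = C(d,s)$, independent of $q$ and $f$, such that the discrete $s$-energy satisfies $I_s(G_n) = n^{-2} \sum_{p \ne p',\, p,p' \in G_n} |p-p'|^{-s} \le C$. -/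
open Finset

/-!
Put `t = s / (d - 1) ∈ [0, 1)`. For `j ≠ j'` both `1/q` and every coordinate gap `|jᵢ - j'ᵢ|/q`
are at most `|p - p'|`, so `|p - p'|^(-s) = (|p - p'|^(d-1))^(-t)` is at most
`∏ᵢ ((|jᵢ - j'ᵢ| + 1) / (2q))^(-t)`. Summed over all pairs this product factorizes into the
`(d-1)`-st power of a one-dimensional double sum, which `∑_{m<q} (m+1)^(-t) ≤ q^(1-t)/(1-t)`
bounds by `4q²/(1-t)`; the powers of `q` then cancel against `n⁻² = q^(-2(d-1))`.
-/

/-- The point of the point-set graph `G_n(f)` corresponding to index `j`: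
its first `d-1` coordinates are `j i / q` and its last coordinate is `f(j/q)`. -/
noncomputable def graphPt (d q : ℕ) (f : EuclideanSpace ℝ (Fin (d - 1)) → ℝ)
    (j : Fin (d - 1) → Fin q) : EuclideanSpace ℝ (Fin d) :=
  WithLp.toLp 2 (fun (i : Fin d) => if h : (i : ℕ) < d - 1 then (j ⟨i, h⟩ : ℝ) / q
           else f (WithLp.toLp 2 (fun i' => (j i' : ℝ) / q)))

/-- Discrete `s`-energy of `G_n(f)`, `n = q^(d-1)`, summed over index pairs. -/
noncomputable def graphEnergy (d q : ℕ) (f : EuclideanSpace ℝ (Fin (d - 1)) → ℝ)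
    (s : ℝ) : ℝ :=
  (((q : ℝ) ^ (d - 1))⁻¹) ^ 2 *
    ∑ j : Fin (d - 1) → Fin q, ∑ j' : Fin (d - 1) → Fin q,
      if j ≠ j' then dist (graphPt d q f j) (graphPt d q f j') ^ (-s) else 0

open Real

-- Bernoulli's inequality at `1 - 1/x`, a discrete stand-in for `∫_{x-1}^x y^(-t) dy ≥ x^(-t)`.
lemma one_sub_mul_rpow_neg_le_sub_rpow {t x : ℝ} (ht0 : 0 ≤ t) (ht1 : t ≤ 1) (hx : 1 ≤ x) :
    (1 - t) * x ^ (-t) ≤ x ^ (1 - t) - (x - 1) ^ (1 - t) := by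
  have hx0 : 0 < x := by linarith
  have hbern := rpow_one_add_le_one_add_mul_self (s := -x⁻¹)
    (by linarith [inv_le_one_of_one_le₀ hx]) (p := 1 - t) (by linarith) (by linarith)
  have hsplit : x - 1 = x * (1 + -x⁻¹) := by rw [mul_add, mul_neg, mul_inv_cancel₀ hx0.ne']; ring
  have hrpow : x ^ (1 - t) * x⁻¹ = x ^ (-t) := by
    rw [← rpow_neg_one, ← rpow_add hx0]; ring_nf
  rw [hsplit, mul_rpow hx0.le (by linarith [inv_le_one_of_one_le₀ hx])]
  nlinarith [rpow_pos_of_pos hx0 (1 - t)]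

lemma sum_range_add_one_rpow_neg_le {t : ℝ} (ht0 : 0 ≤ t) (ht1 : t < 1) (N : ℕ) :
    ∑ m ∈ range N, ((m : ℝ) + 1) ^ (-t) ≤ (N : ℝ) ^ (1 - t) / (1 - t) := by
  have h1t : 0 < 1 - t := by linarith
  induction N with
  | zero => simp [zero_rpow h1t.ne']
  | succ N ih =>
    have step := one_sub_mul_rpow_neg_le_sub_rpow ht0 ht1.le (x := (N : ℝ) + 1)
      (by linarith [N.cast_nonneg (α := ℝ)])
    rw [add_sub_cancel_right] at step
    rw [le_div_iff₀ h1t] at ih ⊢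
    rw [sum_range_succ, Nat.cast_succ, add_mul]
    linarith

lemma Nat.cast_dist (a b : ℕ) : (Nat.dist a b : ℝ) = |(a : ℝ) - b| := by
  rcases le_total a b with h | h
  · rw [Nat.dist_eq_sub_of_le h, Nat.cast_sub h, abs_sub_comm, abs_of_nonneg (by simpa)]
  · rw [Nat.dist_eq_sub_of_le_right h, Nat.cast_sub h, abs_of_nonneg (by simpa)]

lemma sum_range_dist_le_two_mul {g : ℕ → ℝ} (hg : ∀ m, 0 ≤ g m) {a q : ℕ} (ha : a < q) :
    ∑ b ∈ range q, g (Nat.dist a b) ≤ 2 * ∑ m ∈ range q, g m := by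
  have hfiber : ∀ m, (#{b ∈ range q | Nat.dist a b = m} : ℝ) ≤ 2 := by
    intro m
    have hsub : ({b ∈ range q | Nat.dist a b = m} : Finset ℕ) ⊆ {a - m, a + m} := by
      intro b hb
      rw [Finset.mem_filter, mem_range, Nat.dist] at hb
      simp only [mem_insert, mem_singleton]
      omega
    exact_mod_cast (card_le_card hsub).trans card_le_two
  have himage : (range q).image (Nat.dist a) ⊆ range q := by
    simp only [subset_iff, mem_image, mem_range, Nat.dist]
    rintro m ⟨b, hb, rfl⟩
    omega
  rw [sum_comp, mul_sum]
  calc ∑ m ∈ (range q).image (Nat.dist a), #{b ∈ range q | Nat.dist a b = m} • g m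
      ≤ ∑ m ∈ (range q).image (Nat.dist a), 2 * g m :=
        sum_le_sum fun m _ => by rw [nsmul_eq_mul]; gcongr; exacts [hg m, hfiber m]
    _ ≤ ∑ m ∈ range q, 2 * g m :=
        sum_le_sum_of_subset_of_nonneg himage fun m _ _ => by linarith [hg m]

lemma rpow_neg_mul_card_le_prod_rpow_neg {ι : Type*} [Fintype ι] {u : ι → ℝ} {D t : ℝ}
    (hu : ∀ i, 0 < u i) (huD : ∀ i, u i ≤ D) (ht : 0 ≤ t) :
    D ^ (-(t * Fintype.card ι)) ≤ ∏ i, u i ^ (-t) := by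
  rcases isEmpty_or_nonempty ι with hι | ⟨⟨i⟩⟩
  · simp
  have hD : 0 < D := (hu i).trans_le (huD i)
  rw [finsetProd_rpow _ _ fun i _ => (hu i).le, ← neg_mul, mul_comm, rpow_natCast_mul hD.le]
  have hprod : ∏ i, u i ≤ D ^ Fintype.card ι := by
    simpa using prod_le_prod (s := univ) (fun i _ => (hu i).le) fun i _ => huD i
  exact rpow_le_rpow_of_nonpos (prod_pos fun i _ => hu i) hprod (neg_nonpos.2 ht)

lemma sum_sum_prod_eq_pow {ι κ R : Type*} [Fintype ι] [DecidableEq ι] [Fintype κ]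
    [CommSemiring R] (g : κ → κ → R) :
    ∑ j : ι → κ, ∑ j' : ι → κ, ∏ i, g (j i) (j' i) = (∑ a, ∑ b, g a b) ^ Fintype.card ι := by
  calc ∑ j : ι → κ, ∑ j' : ι → κ, ∏ i, g (j i) (j' i) = ∑ j : ι → κ, ∏ i, ∑ b, g (j i) b := by
        simp only [Fintype.prod_sum]
    _ = (∑ a, ∑ b, g a b) ^ Fintype.card ι := by
        rw [← Fintype.prod_sum (fun _ a => ∑ b, g a b), prod_const, card_univ]

lemma graphPt_apply_castLE {d q : ℕ} (f : EuclideanSpace ℝ (Fin (d - 1)) → ℝ)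
    (j : Fin (d - 1) → Fin q) (i : Fin (d - 1)) :
    graphPt d q f j (Fin.castLE (Nat.sub_le d 1) i) = (j i : ℝ) / q := by
  simp [graphPt]

lemma dist_div_le_dist_graphPt {d q : ℕ} (f : EuclideanSpace ℝ (Fin (d - 1)) → ℝ)
    (j j' : Fin (d - 1) → Fin q) (i : Fin (d - 1)) :
    (Nat.dist (j i) (j' i) : ℝ) / q ≤ dist (graphPt d q f j) (graphPt d q f j') := by
  have h := PiLp.dist_apply_le (graphPt d q f j) (graphPt d q f j') (Fin.castLE (Nat.sub_le d 1) i)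
  rwa [graphPt_apply_castLE, graphPt_apply_castLE, Real.dist_eq, ← sub_div, abs_div,
    Nat.abs_cast, ← Nat.cast_dist] at h

lemma dist_graphPt_rpow_neg_le {d q : ℕ} {t : ℝ} (ht : 0 ≤ t) (hq : 0 < (q : ℝ))
    (f : EuclideanSpace ℝ (Fin (d - 1)) → ℝ) {j j' : Fin (d - 1) → Fin q} (hj : j ≠ j') :
    dist (graphPt d q f j) (graphPt d q f j') ^ (-(t * (d - 1 : ℕ))) ≤
      ∏ i, (((Nat.dist (j i) (j' i) : ℝ) + 1) / (2 * q)) ^ (-t) := by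
  set D := dist (graphPt d q f j) (graphPt d q f j')
  obtain ⟨i₀, hi₀⟩ := Function.ne_iff.1 hj
  have hsep : 1 / (q : ℝ) ≤ D := by
    refine le_trans ?_ (dist_div_le_dist_graphPt f j j' i₀)
    gcongr
    exact_mod_cast Nat.one_le_iff_ne_zero.2 fun h => hi₀ (Fin.ext (Nat.eq_of_dist_eq_zero h))
  have hle : ∀ i, ((Nat.dist (j i) (j' i) : ℝ) + 1) / (2 * q) ≤ D := by
    intro i
    have hi := dist_div_le_dist_graphPt f j j' i
    calc ((Nat.dist (j i) (j' i) : ℝ) + 1) / (2 * q)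
        = ((Nat.dist (j i) (j' i) : ℝ) / q + 1 / q) / 2 := by field_simp
      _ ≤ D := by linarith
  simpa using rpow_neg_mul_card_le_prod_rpow_neg (fun i => by positivity) hle ht

lemma graphEnergy_le {d q : ℕ} {t : ℝ} (ht : 0 ≤ t) (hq : 0 < (q : ℝ))
    (f : EuclideanSpace ℝ (Fin (d - 1)) → ℝ) :
    graphEnergy d q f (t * (d - 1 : ℕ)) ≤ (((q : ℝ) ^ (d - 1))⁻¹) ^ 2 *
      (∑ a : Fin q, ∑ b : Fin q, (((Nat.dist a b : ℝ) + 1) / (2 * q)) ^ (-t)) ^ (d - 1) := by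
  have hfactor := sum_sum_prod_eq_pow (ι := Fin (d - 1))
    fun a b : Fin q => (((Nat.dist a b : ℝ) + 1) / (2 * q)) ^ (-t)
  rw [Fintype.card_fin] at hfactor
  rw [graphEnergy, ← hfactor]
  refine mul_le_mul_of_nonneg_left (sum_le_sum fun j _ => sum_le_sum fun j' _ => ?_) (by positivity)
  split_ifs with hj
  · exact dist_graphPt_rpow_neg_le ht hq f hj
  · positivity

lemma sum_sum_dist_add_one_div_rpow_neg_le {q : ℕ} {t : ℝ} (ht0 : 0 ≤ t) (ht1 : t < 1)
    (hq : 0 < (q : ℝ)) :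
    ∑ a : Fin q, ∑ b : Fin q, (((Nat.dist a b : ℝ) + 1) / (2 * q)) ^ (-t) ≤
      4 / (1 - t) * q ^ 2 := by
  have h1t : 0 < 1 - t := by linarith
  have hrow : ∀ a : Fin q, ∑ b : Fin q, ((Nat.dist a b : ℝ) + 1) ^ (-t) ≤
      2 * ((q : ℝ) ^ (1 - t) / (1 - t)) := by
    intro a
    rw [Fin.sum_univ_eq_sum_range (fun b => ((Nat.dist a b : ℝ) + 1) ^ (-t))]
    calc _ ≤ 2 * ∑ m ∈ range q, ((m : ℝ) + 1) ^ (-t) :=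
          sum_range_dist_le_two_mul (g := fun m => ((m : ℝ) + 1) ^ (-t)) (fun m => by positivity)
            a.isLt
      _ ≤ _ := by gcongr; exact sum_range_add_one_rpow_neg_le ht0 ht1 q
  have hsum : ∑ a : Fin q, ∑ b : Fin q, ((Nat.dist a b : ℝ) + 1) ^ (-t) ≤
      q * (2 * ((q : ℝ) ^ (1 - t) / (1 - t))) := by
    simpa using sum_le_sum fun a (_ : a ∈ univ) => hrow a
  have hpow : (q : ℝ) ^ (1 - t) * q ^ t = q := by
    rw [← rpow_add hq, sub_add_cancel, rpow_one]
  have htwo : (2 : ℝ) ^ t ≤ 2 := by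
    simpa using rpow_le_rpow_of_exponent_le (by norm_num : (1 : ℝ) ≤ 2) ht1.le
  have hscale : ∑ a : Fin q, ∑ b : Fin q, (((Nat.dist a b : ℝ) + 1) / (2 * q)) ^ (-t) =
      (∑ a : Fin q, ∑ b : Fin q, ((Nat.dist a b : ℝ) + 1) ^ (-t)) * (2 * q) ^ t := by
    simp only [sum_mul]
    refine sum_congr rfl fun a _ => sum_congr rfl fun b _ => ?_
    rw [div_rpow (by positivity) (by positivity), rpow_neg (by positivity : (0 : ℝ) ≤ 2 * q),
      div_inv_eq_mul]
  rw [hscale]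
  calc (∑ a : Fin q, ∑ b : Fin q, ((Nat.dist a b : ℝ) + 1) ^ (-t)) * (2 * q) ^ t
      ≤ q * (2 * ((q : ℝ) ^ (1 - t) / (1 - t))) * (2 * q) ^ t := by gcongr
    _ = 2 * 2 ^ t / (1 - t) * q * ((q : ℝ) ^ (1 - t) * q ^ t) := by
        rw [mul_rpow (by norm_num) hq.le]; ring
    _ ≤ 4 / (1 - t) * q ^ 2 := by
        rw [hpow, sq, ← mul_assoc]
        gcongr
        linarith

theorem discrete_energy_of_graph_bounded_general (d : ℕ) (s : ℝ)
    (hs0 : 0 ≤ s) (hs : s < (d : ℝ) - 1) :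
    ∃ C : ℝ, ∀ (q : ℕ) (f : EuclideanSpace ℝ (Fin (d - 1)) → ℝ), 1 ≤ q →
      (∀ x, (∀ i, x i ∈ Set.Icc (0 : ℝ) 1) → f x ∈ Set.Icc (0 : ℝ) 1) →
      graphEnergy d q f s ≤ C := by
  have hn : ((d - 1 : ℕ) : ℝ) = d - 1 := by
    rw [Nat.cast_sub (by exact_mod_cast (show (1 : ℝ) ≤ d by linarith)), Nat.cast_one]
  have hn0 : (0 : ℝ) < (d - 1 : ℕ) := by linarith
  obtain ⟨t, ht0, ht1, rfl⟩ : ∃ t, 0 ≤ t ∧ t < 1 ∧ s = t * (d - 1 : ℕ) :=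
    ⟨s / (d - 1 : ℕ), div_nonneg hs0 hn0.le, (div_lt_one hn0).2 (hn ▸ hs),
      (div_mul_cancel₀ s hn0.ne').symm⟩
  refine ⟨(4 / (1 - t)) ^ (d - 1), fun q f hq _ => ?_⟩
  have hq0 : (0 : ℝ) < q := by exact_mod_cast hq
  calc graphEnergy d q f (t * (d - 1 : ℕ))
      ≤ (((q : ℝ) ^ (d - 1))⁻¹) ^ 2 *
          (∑ a : Fin q, ∑ b : Fin q, (((Nat.dist a b : ℝ) + 1) / (2 * q)) ^ (-t)) ^ (d - 1) :=
        graphEnergy_le ht0 hq0 f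
    _ ≤ (((q : ℝ) ^ (d - 1))⁻¹) ^ 2 * (4 / (1 - t) * q ^ 2) ^ (d - 1) := by
        gcongr
        exact sum_sum_dist_add_one_div_rpow_neg_le ht0 ht1 hq0
    _ = (4 / (1 - t)) ^ (d - 1) := by
        rw [mul_pow, ← pow_mul, inv_pow, ← pow_mul, mul_comm 2]
        field_simp

/-- For `0 ≤ s < d-1`, the discrete `s`-energy of any point-set graph is bounded
by a constant depending only on `d` and `s`. -/
theorem discrete_energy_of_graph_bounded (d : ℕ) (s : ℝ) (hd : 2 ≤ d)
    (hs0 : 0 ≤ s) (hs : s < (d : ℝ) - 1) :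
    ∃ C : ℝ, ∀ (q : ℕ) (f : EuclideanSpace ℝ (Fin (d - 1)) → ℝ), 1 ≤ q →
      (∀ x, (∀ i, x i ∈ Set.Icc (0 : ℝ) 1) → f x ∈ Set.Icc (0 : ℝ) 1) →
      graphEnergy d q f s ≤ C :=
  discrete_energy_of_graph_bounded_general d s hs0 hs
end

section
/- Let $\mathcal{P} = \{P_n\}$ be a family of finite point sets all contained in a compact set $E \subset \mathbb{R}^d$ satisfying $N_E(\delta) \le \max(C_E \delta^{-k},1)$ for all $\delta > 0$, where $k > 0$. Then the discrete Hausdorff dimension $\dim_{\mathcal{H}}(\mathcal{P}) = \sup\{s \in [0,d] : \sup_n I_s(P_n) < \infty\}$ satisfies $\dim_{\mathcal{H}}(\mathcal{P}) \le k$. -/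
open Finset

/-- Minimal number of closed balls of radius `r` needed to cover `E`. -/
noncomputable def covBall {X : Type*} [PseudoMetricSpace X] (E : Set X) (r : ℝ) : ℕ :=
  sInf {N : ℕ | ∃ c : Fin N → X, E ⊆ ⋃ i, Metric.closedBall (c i) r}

open scoped Classical in
/-- Discrete `s`-energy of a finite point set. -/
noncomputable def discreteEnergy {X : Type*} [PseudoMetricSpace X] (s : ℝ)
    (P : Finset X) : ℝ :=
  ((P.card : ℝ))⁻¹ ^ 2 * ∑ p ∈ P, ∑ p' ∈ P, if p ≠ p' then dist p p' ^ (-s) else 0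

/-- Discrete Hausdorff dimension of a family of point sets in `ℝ^d`:
`sup { s ∈ [0,d] : sup_n I_s(P_n) < ∞ }` (with `sSup ∅ = 0` by convention in `ℝ`). -/
noncomputable def discreteHausdorffDim {X : Type*} [PseudoMetricSpace X] (d : ℕ)
    (P : ℕ → Finset X) : ℝ :=
  sSup {s : ℝ | s ∈ Set.Icc (0 : ℝ) (d : ℝ) ∧ ∃ M : ℝ, ∀ n, discreteEnergy s (P n) ≤ M}

/-! If `s > k` and the `s`-energies stayed bounded, take `δ ≍ n^{-1/k}`, so that `E`, hence `P n`,
is covered by `N ≤ n / 2` balls of radius `δ`. By Cauchy–Schwarz over the balls, at least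
`n² / N - n ≥ n` ordered pairs of distinct points share a ball, and each such pair contributes at
least `(2δ)^{-s} ≍ n^{s/k}` to the energy sum; hence `I_s(P n) ≳ n^{s/k - 1} → ∞`. -/

open Filter

namespace Finset

variable {α ι : Type*} [DecidableEq ι]

theorem sq_card_le_card_mul_sum_card_fiber {s : Finset α} {t : Finset ι} {f : α → ι}
    (hf : ∀ a ∈ s, f a ∈ t) : #s ^ 2 ≤ #t * ∑ a ∈ s, #{b ∈ s | f b = f a} := by
  have hsq : ∑ a ∈ s, #{b ∈ s | f b = f a} = ∑ i ∈ t, #{a ∈ s | f a = i} ^ 2 := by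
    rw [← sum_fiberwise_of_maps_to hf]
    refine sum_congr rfl fun i _ => ?_
    rw [sum_congr rfl fun a ha => by rw [(mem_filter.1 ha).2], sum_const, smul_eq_mul, sq]
  rw [hsq, card_eq_sum_card_fiberwise hf]
  exact sq_sum_le_card_mul_sum_sq

end Finset

section Energy

variable {X ι : Type*} [MetricSpace X]

open scoped Classical in
theorem rpow_mul_card_fiber_sub_one_le [DecidableEq ι] {P : Finset X} {f : X → ι} {r s : ℝ}
    (hs : 0 ≤ s) (hr : ∀ p ∈ P, ∀ p' ∈ P, f p' = f p → dist p p' ≤ r) {p : X} (hp : p ∈ P) :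
    r ^ (-s) * (#{p' ∈ P | f p' = f p} - 1 : ℝ) ≤
      ∑ p' ∈ P, if p ≠ p' then dist p p' ^ (-s) else 0 := by
  have hp_fiber : p ∈ {p' ∈ P | f p' = f p} := mem_filter.2 ⟨hp, rfl⟩
  calc r ^ (-s) * (#{p' ∈ P | f p' = f p} - 1 : ℝ)
      = ∑ p' ∈ {p' ∈ P | f p' = f p}.erase p, r ^ (-s) := by
        rw [sum_const, card_erase_of_mem hp_fiber, nsmul_eq_mul,
          Nat.cast_sub (card_pos.2 ⟨p, hp_fiber⟩), Nat.cast_one, mul_comm]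
    _ ≤ ∑ p' ∈ {p' ∈ P | f p' = f p}.erase p, if p ≠ p' then dist p p' ^ (-s) else 0 := by
        refine sum_le_sum fun p' hp' => ?_
        obtain ⟨hne, hp'_fiber⟩ := mem_erase.1 hp'
        obtain ⟨hp'P, hfp'⟩ := mem_filter.1 hp'_fiber
        rw [if_pos (Ne.symm hne)]
        exact Real.rpow_le_rpow_of_nonpos (dist_pos.2 (Ne.symm hne)) (hr p hp p' hp'P hfp')
          (neg_nonpos.2 hs)
    _ ≤ ∑ p' ∈ P, if p ≠ p' then dist p p' ^ (-s) else 0 :=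
        sum_le_sum_of_subset_of_nonneg ((erase_subset _ _).trans (filter_subset _ _))
          fun _ _ _ => by split_ifs <;> positivity

theorem rpow_mul_inv_card_sub_inv_card_le_discreteEnergy [DecidableEq ι] {P : Finset X}
    (hP : P.Nonempty) {t : Finset ι} {f : X → ι} (hf : ∀ p ∈ P, f p ∈ t) {r s : ℝ} (hs : 0 ≤ s)
    (hr : ∀ p ∈ P, ∀ p' ∈ P, f p' = f p → dist p p' ≤ r) :
    r ^ (-s) * ((#t : ℝ)⁻¹ - (#P : ℝ)⁻¹) ≤ discreteEnergy s P := by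
  obtain ⟨p₀, hp₀⟩ := hP
  have hr₀ : 0 ≤ r := (dist_self p₀).symm.trans_le (hr p₀ hp₀ p₀ hp₀ rfl)
  have hP₀ : (0 : ℝ) < #P := by exact_mod_cast card_pos.2 ⟨p₀, hp₀⟩
  have ht₀ : (0 : ℝ) < #t := by exact_mod_cast card_pos.2 ⟨f p₀, hf p₀ hp₀⟩
  have hcs : (#P : ℝ) ^ 2 / #t ≤ ∑ p ∈ P, (#{p' ∈ P | f p' = f p} : ℝ) := by
    rw [div_le_iff₀ ht₀, mul_comm]
    exact_mod_cast sq_card_le_card_mul_sum_card_fiber hf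
  calc r ^ (-s) * ((#t : ℝ)⁻¹ - (#P : ℝ)⁻¹)
      = (#P : ℝ)⁻¹ ^ 2 * (r ^ (-s) * ((#P : ℝ) ^ 2 / #t - #P)) := by
        field_simp
    _ ≤ (#P : ℝ)⁻¹ ^ 2 * (r ^ (-s) * ∑ p ∈ P, (#{p' ∈ P | f p' = f p} - 1 : ℝ)) := by
        rw [sum_sub_distrib, sum_const, nsmul_one]
        gcongr
    _ ≤ discreteEnergy s P := by
        rw [discreteEnergy, mul_sum]
        gcongr with p hp
        exact rpow_mul_card_fiber_sub_one_le hs hr hp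

end Energy

section Covering

variable {X : Type*}

theorem exists_closedBall_cover_covBall [PseudoMetricSpace X] {E : Set X} (hE : IsCompact E)
    {δ : ℝ} (hδ : 0 < δ) : ∃ c : Fin (covBall E δ) → X, E ⊆ ⋃ i, Metric.closedBall (c i) δ := by
  obtain ⟨t, -, ht, hEt⟩ := hE.finite_cover_balls hδ
  obtain ⟨N, c, rfl⟩ := ht.fin_embedding
  rw [Set.biUnion_range] at hEt
  exact Nat.sInf_mem (s := {N : ℕ | ∃ c : Fin N → X, E ⊆ ⋃ i, Metric.closedBall (c i) δ})
    ⟨N, c, hEt.trans (Set.iUnion_mono fun _ => Metric.ball_subset_closedBall)⟩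

theorem covBall_pos [PseudoMetricSpace X] {E : Set X} (hE : IsCompact E) (hne : E.Nonempty)
    {δ : ℝ} (hδ : 0 < δ) : 0 < covBall E δ := by
  obtain ⟨c, hc⟩ := exists_closedBall_cover_covBall hE hδ
  obtain ⟨x, hx⟩ := hne
  exact (Set.mem_iUnion.1 (hc hx)).choose.pos

variable [MetricSpace X] {E : Set X} {P : Finset X} {δ s : ℝ}

theorem rpow_mul_inv_covBall_sub_inv_card_le_discreteEnergy (hE : IsCompact E)
    (hP : P.Nonempty) (hPE : ↑P ⊆ E) (hδ : 0 < δ) (hs : 0 ≤ s) :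
    (2 * δ) ^ (-s) * ((covBall E δ : ℝ)⁻¹ - (#P : ℝ)⁻¹) ≤ discreteEnergy s P := by
  obtain ⟨c, hc⟩ := exists_closedBall_cover_covBall hE hδ
  have : Nonempty (Fin (covBall E δ)) :=
    Fin.pos_iff_nonempty.1 (covBall_pos hE (hP.to_set.mono hPE) hδ)
  set f : X → Fin (covBall E δ) := fun x =>
    Classical.epsilon fun i => x ∈ Metric.closedBall (c i) δ
  have hf : ∀ p ∈ P, dist p (c (f p)) ≤ δ := fun p hp =>
    Classical.epsilon_spec (Set.mem_iUnion.1 (hc (hPE hp)))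
  have hdiam : ∀ p ∈ P, ∀ p' ∈ P, f p' = f p → dist p p' ≤ 2 * δ := fun p hp p' hp' hpp' => by
    linarith [dist_triangle_right p p' (c (f p)), hf p hp, hpp' ▸ hf p' hp']
  simpa using rpow_mul_inv_card_sub_inv_card_le_discreteEnergy hP (fun p _ => mem_univ (f p))
    hs hdiam

theorem rpow_div_card_le_discreteEnergy (hE : IsCompact E) (hPE : ↑P ⊆ E) (hδ : 0 < δ)
    (hs : 0 ≤ s) (hN : 2 * covBall E δ ≤ #P) : (2 * δ) ^ (-s) / #P ≤ discreteEnergy s P := by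
  rcases P.eq_empty_or_nonempty with rfl | hP
  · simp [discreteEnergy]
  have hN₀ : (0 : ℝ) < covBall E δ := by exact_mod_cast covBall_pos hE (hP.to_set.mono hPE) hδ
  have hinv : (#P : ℝ)⁻¹ ≤ (covBall E δ : ℝ)⁻¹ - (#P : ℝ)⁻¹ := by
    have := inv_anti₀ (by positivity) (by exact_mod_cast hN : (2 * covBall E δ : ℝ) ≤ #P)
    rw [mul_inv] at this
    linarith
  rw [div_eq_mul_inv]
  exact (mul_le_mul_of_nonneg_left hinv (by positivity)).trans
    (rpow_mul_inv_covBall_sub_inv_card_le_discreteEnergy hE hP hPE hδ hs)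

theorem tendsto_discreteEnergy_atTop (hE : IsCompact E) {k C : ℝ} (hk : 0 < k) (hC : 0 < C)
    (hcov : ∀ δ : ℝ, 0 < δ → (covBall E δ : ℝ) ≤ max (C * δ ^ (-k)) 1)
    {P : ℕ → Finset X} (hP : ∀ n, ↑(P n) ⊆ E ∧ #(P n) = n) (hks : k < s) :
    Tendsto (fun n => discreteEnergy s (P n)) atTop atTop := by
  have hlower : ∀ n : ℕ, 2 ≤ n →
      2 ^ (-s) / (2 * C) ^ (s / k) * (n : ℝ) ^ (s / k - 1) ≤ discreteEnergy s (P n) := by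
    intro n hn
    have hn' : (2 : ℝ) ≤ n := by exact_mod_cast hn
    set δ : ℝ := ((n : ℝ) / (2 * C)) ^ (-k)⁻¹
    have hδ : 0 < δ := by positivity
    have hδk : δ ^ (-k) = n / (2 * C) := Real.rpow_inv_rpow (by positivity) (by linarith)
    have hN : 2 * covBall E δ ≤ #(P n) := by
      have h := hcov δ hδ
      rw [hδk, mul_div_left_comm, div_mul_cancel_right₀ hC.ne', max_eq_left (by linarith)] at h
      rw [(hP n).2]
      exact_mod_cast (by linarith : (2 * covBall E δ : ℝ) ≤ n)
    calc 2 ^ (-s) / (2 * C) ^ (s / k) * (n : ℝ) ^ (s / k - 1) = (2 * δ) ^ (-s) / n := by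
          rw [Real.mul_rpow zero_le_two hδ.le, ← Real.rpow_mul (by positivity),
            Real.div_rpow (by positivity) (by positivity), Real.rpow_sub_one (by positivity)]
          field_simp
      _ ≤ discreteEnergy s (P n) := by
          simpa [(hP n).2] using rpow_div_card_le_discreteEnergy hE (hP n).1 hδ (by linarith) hN
  refine tendsto_atTop_mono' _ (eventually_atTop.2 ⟨2, hlower⟩) ?_
  refine Tendsto.const_mul_atTop (by positivity) ?_
  exact (tendsto_rpow_atTop (by rw [sub_pos, one_lt_div hk]; exact hks)).comp
    tendsto_natCast_atTop_atTop

end Covering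

/-- If every `P n` (a set of `n` points) lies in a compact set `E` with
`N_E(δ) ≤ max(C_E δ^{-k}, 1)` for all `δ > 0`, `k > 0`, then the discrete Hausdorff
dimension of the family is at most `k`. -/
theorem discreteHausdorffDim_le_of_minkowski {d : ℕ} (E : Set (EuclideanSpace ℝ (Fin d)))
    (hE : IsCompact E) (k C_E : ℝ) (hk : 0 < k) (hC : 0 < C_E)
    (hcov : ∀ δ : ℝ, 0 < δ → (covBall E δ : ℝ) ≤ max (C_E * δ ^ (-k)) 1)
    (P : ℕ → Finset (EuclideanSpace ℝ (Fin d)))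
    (hP : ∀ n, ↑(P n) ⊆ E ∧ (P n).card = n) :
    discreteHausdorffDim d P ≤ k := by
  refine Real.sSup_le (fun s ⟨_, M, hM⟩ => ?_) hk.le
  by_contra! hks
  obtain ⟨n, hn⟩ :=
    ((tendsto_discreteEnergy_atTop hE hk hC hcov hP hks).eventually_gt_atTop M).exists
  exact (hM n).not_gt hn
end
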